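/- For all 2 ≤ i,k ≤ l and m1,n1,m2,n2 ∈ Z, [e_{1i}(m1,n1), e_{ik}(m2,n2)] = q^{n1 m2} e_{1k}(m1+m2, n1+n2), where e_{ik}(m,n) = Σ_{(m',n')} q^{m' n} x_i(m+m', n+n') ∂/∂x_k(m',n'). -/

import Mathlib

open MvPolynomial

/-- Index set `{2, …, l}` for the variables. -/
abbrev Idx (l : ℕ) := {i : ℕ // 2 ≤ i ∧ i ≤ l}

/-- The polynomial ring `V = ℂ[x_i(m,n) : 2 ≤ i ≤ l, (m,n) ∈ ℤ²]`. -/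
abbrev V (l : ℕ) := MvPolynomial (Idx l × ℤ × ℤ) ℂ

/-- `e_{ij}(m1,n1) = Σ_{(m,n)} q^{m n1} x_i(m1+m, n1+n) ∂/∂x_j(m,n)`, for `2 ≤ i,j ≤ l`. -/
noncomputable def eGen (l : ℕ) (q : ℂ) (i j : Idx l) (m1 n1 : ℤ) (p : V l) : V l :=
  ∑ᶠ mn : ℤ × ℤ,
    q ^ (mn.1 * n1) • (X (i, m1 + mn.1, n1 + mn.2) * pderiv (j, mn.1, mn.2) p)

/-- `e_{i1}(m,n)` = multiplication by the variable `x_i(m,n)`. -/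
noncomputable def eLow (l : ℕ) (i : Idx l) (m n : ℤ) (p : V l) : V l :=
  X (i, m, n) * p

/-- `e_{11}(m1,n1) = μ δ_{(m1,n1),(0,0)} − Σ_{j=2}^l Σ_{(m,n)} q^{n m1} x_j(m1+m, n1+n) ∂/∂x_j(m,n)`. -/
noncomputable def e11 (l : ℕ) (q μ : ℂ) (m1 n1 : ℤ) (p : V l) : V l :=
  (if (m1, n1) = ((0 : ℤ), (0 : ℤ)) then μ else 0) • p
  - ∑ᶠ j : Idx l, ∑ᶠ mn : ℤ × ℤ,
      q ^ (mn.2 * m1) • (X (j, m1 + mn.1, n1 + mn.2) * pderiv (j, mn.1, mn.2) p)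

/-- `e_{1i}(m1,n1) = q^{−m1 n1} μ ∂/∂x_i(−m1,−n1)
  − Σ_{j=2}^l Σ_{(m,n),(m',n')} q^{n1 m' + n m1 + n m'}
      x_j(m1+m+m', n1+n+n') ∂/∂x_j(m,n) ∂/∂x_i(m',n')`, for `2 ≤ i ≤ l`. -/
noncomputable def eUp (l : ℕ) (q μ : ℂ) (i : Idx l) (m1 n1 : ℤ) (p : V l) : V l :=
  q ^ (-(m1 * n1)) • μ • pderiv (i, -m1, -n1) p
  - ∑ᶠ j : Idx l, ∑ᶠ mm : (ℤ × ℤ) × (ℤ × ℤ),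
      q ^ (n1 * mm.2.1 + mm.1.2 * m1 + mm.1.2 * mm.2.1) •
        (X (j, m1 + mm.1.1 + mm.2.1, n1 + mm.1.2 + mm.2.2) *
          pderiv (j, mm.1.1, mm.1.2) (pderiv (i, mm.2.1, mm.2.2) p))

/-- Degree operator `D1 = Σ_{i=2}^l Σ_{(m,n)} m · x_i(m,n) ∂/∂x_i(m,n)`. -/
noncomputable def D1 (l : ℕ) (p : V l) : V l :=
  ∑ᶠ i : Idx l, ∑ᶠ mn : ℤ × ℤ,
    (mn.1 : ℂ) • (X (i, mn.1, mn.2) * pderiv (i, mn.1, mn.2) p)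

/-- Degree operator `D2 = Σ_{i=2}^l Σ_{(m,n)} n · x_i(m,n) ∂/∂x_i(m,n)`. -/
noncomputable def D2 (l : ℕ) (p : V l) : V l :=
  ∑ᶠ i : Idx l, ∑ᶠ mn : ℤ × ℤ,
    (mn.2 : ℂ) • (X (i, mn.1, mn.2) * pderiv (i, mn.1, mn.2) p)

/-- Commutator `[A,B] = A∘B − B∘A` of operators on `V`. -/
noncomputable def oComm {l : ℕ} (A B : V l → V l) : V l → V l := fun p => A (B p) - B (A p)

/-!
Each `e_{ik}(m,n)` is the derivation of `V` with `x_k(c) ↦ q^{c₁ n} x_i((m,n) + c)`, and the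
quadratic part of `e_{1i}(m₁,n₁)` factors as `Σ_b q^{n₁ b₁} E(m₁ + b₁, n₁ + b₂) ∘ ∂/∂x_i(b)`, where
`E(m,n)` is the derivation part of `e_{11}(m,n)`. Checking on generators, `e_{ik}` commutes with
every `E(m,n)`, and `[∂/∂x_i(b), e_{ik}(m₂,n₂)] = q^{(b₁-m₂) n₂} ∂/∂x_k(b - (m₂,n₂))`. Hence
`[e_{1i}(m₁,n₁), e_{ik}(m₂,n₂)]` is `e_{1i}(m₁,n₁)` with each `∂/∂x_i(b)` replaced by that
derivative along `x_k`, and the shift `b = c + (m₂,n₂)` turns this into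
`q^{n₁ m₂} e_{1k}(m₁ + m₂, n₁ + n₂)`.
-/

open Function

theorem finsum_comm_of_hasFiniteSupport {α β M : Type*} [AddCommMonoid M] {f : α → β → M}
    (h : HasFiniteSupport (uncurry f)) : ∑ᶠ a, ∑ᶠ b, f a b = ∑ᶠ b, ∑ᶠ a, f a b := by
  have h' : HasFiniteSupport (uncurry f ∘ Prod.swap) :=
    h.preimage Prod.swap_injective.injOn
  calc ∑ᶠ a, ∑ᶠ b, f a b = ∑ᶠ ab, uncurry f ab := (finsum_curry _ h).symm
    _ = ∑ᶠ ba, uncurry f (Prod.swap ba) := (finsum_comp_equiv (Equiv.prodComm β α)).symm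
    _ = ∑ᶠ b, ∑ᶠ a, f a b := finsum_curry _ h'

theorem Derivation.finset_sum_apply {R A M ι : Type*} [CommSemiring R] [CommSemiring A]
    [Algebra R A] [AddCommMonoid M] [Module A M] [Module R M] (t : Finset ι)
    (D : ι → Derivation R A M) (a : A) : (∑ s ∈ t, D s) a = ∑ s ∈ t, D s a := by
  rw [← Derivation.coeFnAddMonoidHom_apply, map_sum, Finset.sum_apply]
  rfl

section
variable {R σ : Type*} [CommRing R]

theorem lie_pderiv_apply_X (D : Derivation R (MvPolynomial σ R) (MvPolynomial σ R)) (v s : σ) :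
    ⁅(pderiv v : Derivation R _ _), D⁆ (X s) = pderiv v (D (X s)) := by
  classical
  rw [Derivation.commutator_apply, pderiv_X, Pi.single_apply]
  split_ifs <;> simp

theorem pderiv_pderiv_comm (u v : σ) (p : MvPolynomial σ R) :
    pderiv u (pderiv v p) = pderiv v (pderiv u p) := by
  classical
  have h : ⁅(pderiv u : Derivation R _ _), pderiv v⁆ = 0 := derivation_ext fun s => by
    rw [lie_pderiv_apply_X, pderiv_X, Pi.single_apply]
    split_ifs <;> simp
  simpa [Derivation.commutator_apply, sub_eq_zero] using congr($h p)

theorem mkDerivation_apply_eq_finsum (g : σ → MvPolynomial σ R) (p : MvPolynomial σ R) :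
    mkDerivation R g p = ∑ᶠ s, pderiv s p * g s := by
  classical
  rw [finsum_eq_sum_of_support_subset (s := p.vars) _ fun s hs => by
    by_contra h; exact hs (by simp [pderiv_eq_zero_of_notMem_vars h])]
  let D : Derivation R (MvPolynomial σ R) (MvPolynomial σ R) := ∑ s ∈ p.vars, g s • pderiv s
  have hD : mkDerivation R g p = D p := derivation_eq_of_forall_mem_vars fun t ht => by
    simp [D, Derivation.finset_sum_apply, pderiv_X, Pi.single_apply, ht]
  rw [hD]
  simp [D, Derivation.finset_sum_apply, mul_comm]

theorem hasFiniteSupport_pderiv (p : MvPolynomial σ R) : HasFiniteSupport fun s => pderiv s p :=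
  p.vars.finite_toSet.subset fun _ hs => by
    by_contra h; exact hs (pderiv_eq_zero_of_notMem_vars h)

variable {ι M : Type*} [Zero M] {f : ι → M}

theorem hasFiniteSupport_of_pderiv_eq_zero {v : ι → σ} (hv : Injective v) (p : MvPolynomial σ R)
    (hf : ∀ c, pderiv (v c) p = 0 → f c = 0) : HasFiniteSupport f :=
  ((hasFiniteSupport_pderiv p).preimage hv.injOn).subset fun c hc h => hc (hf c h)

theorem hasFiniteSupport_of_pderiv_pderiv_eq_zero {u v : ι → σ}
    (huv : Injective fun c => (u c, v c)) (p : MvPolynomial σ R)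
    (hf : ∀ c, pderiv (u c) (pderiv (v c) p) = 0 → f c = 0) : HasFiniteSupport f :=
  (((hasFiniteSupport_pderiv p).prod (hasFiniteSupport_pderiv p)).preimage huv.injOn).subset
    fun c hc => by
      refine ⟨fun h => hc (hf c ?_), fun h => hc (hf c ?_)⟩
      · rw [pderiv_pderiv_comm, show pderiv (u c) p = 0 from h, map_zero]
      · rw [show pderiv (v c) p = 0 from h, map_zero]

end

section
variable {l : ℕ}

/-- The derivation part of `e11`: `e11 l q μ m n p = (μ δ_{(m,n),0}) • p - eDiag l q m n p`. -/
noncomputable def eDiag (l : ℕ) (q : ℂ) (m n : ℤ) : Derivation ℂ (V l) (V l) :=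
  mkDerivation ℂ fun v => q ^ (v.2.2 * m) • X (v.1, m + v.2.1, n + v.2.2)

noncomputable def eGenDer (l : ℕ) (q : ℂ) (i k : Idx l) (m n : ℤ) : Derivation ℂ (V l) (V l) :=
  mkDerivation ℂ fun v => if v.1 = k then q ^ (v.2.1 * n) • X (i, m + v.2.1, n + v.2.2) else 0

theorem eGen_eq_eGenDer (q : ℂ) (i k : Idx l) (m n : ℤ) :
    eGen l q i k m n = eGenDer l q i k m n := by
  funext p
  rw [eGenDer, mkDerivation_apply_eq_finsum, finsum_curry _ (hasFiniteSupport_of_pderiv_eq_zero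
      (v := fun s => s) (fun _ _ h => h) p fun _ h => by simp [h]),
    finsum_eq_single _ k fun j hj => by simp [hj]]
  refine finsum_congr fun c => ?_
  simp [mul_comm]

theorem eUp_eq_sub_finsum_eDiag {q : ℂ} (hq : q ≠ 0) (μ : ℂ) (i : Idx l) (m n : ℤ) (p : V l) :
    eUp l q μ i m n p = q ^ (-(m * n)) • μ • pderiv (i, -m, -n) p
      - ∑ᶠ b : ℤ × ℤ, q ^ (n * b.1) • eDiag l q (m + b.1) (n + b.2) (pderiv (i, b.1, b.2) p) := by
  rw [eUp]
  congr 1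
  simp only [eDiag, mkDerivation_apply_eq_finsum, smul_finsum]
  rw [finsum_comm_of_hasFiniteSupport (hasFiniteSupport_of_pderiv_pderiv_eq_zero
      (u := fun t => t.2) (v := fun t => (i, t.1.1, t.1.2)) (by rintro ⟨b, s⟩ ⟨b', s'⟩ h; simp_all)
      p fun _ h => by simp [uncurry, h])]
  conv_rhs => rw [finsum_curry _ (hasFiniteSupport_of_pderiv_eq_zero (v := fun s => s)
    (fun _ _ h => h) p fun s h => by simp [pderiv_pderiv_comm s, h])]
  refine finsum_congr fun j => ?_
  rw [finsum_curry _ (hasFiniteSupport_of_pderiv_pderiv_eq_zero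
      (u := fun t => (j, t.1.1, t.1.2)) (v := fun t => (i, t.2.1, t.2.2))
      (by rintro ⟨a, b⟩ ⟨a', b'⟩ h; simp_all) p fun _ h => by simp [h])]
  refine finsum_congr fun a => finsum_congr fun b => ?_
  rw [mul_smul_comm, smul_smul, ← zpow_add₀ hq, mul_comm]
  ring_nf

theorem lie_pderiv_eGenDer (q : ℂ) (i k : Idx l) (a b m n : ℤ) :
    ⁅(pderiv (i, a, b) : Derivation ℂ (V l) (V l)), eGenDer l q i k m n⁆
      = q ^ ((a - m) * n) • pderiv (k, a - m, b - n) := by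
  classical
  refine derivation_ext fun ⟨j, c⟩ => ?_
  rw [lie_pderiv_apply_X, eGenDer, mkDerivation_X, Derivation.smul_apply, pderiv_X]
  obtain rfl | hj := eq_or_ne j k
  · obtain rfl | hc := eq_or_ne c (a - m, b - n)
    · simp
    · have : ((i, m + c.1, n + c.2) : Idx l × ℤ × ℤ) ≠ (i, a, b) := by
        contrapose! hc; simp only [Prod.mk.injEq] at hc; ext <;> simp <;> omega
      simp [pderiv_X, this, hc]
  · simp [hj]

theorem lie_eDiag_eGenDer {q : ℂ} (hq : q ≠ 0) (i k : Idx l) (m n m' n' : ℤ) :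
    ⁅eDiag l q m n, eGenDer l q i k m' n'⁆ = 0 := by
  refine derivation_ext fun ⟨j, c⟩ => ?_
  rw [Derivation.commutator_apply, eDiag, eGenDer, mkDerivation_X, mkDerivation_X]
  obtain rfl | hj := eq_or_ne j k
  · simp only [↓reduceIte, Derivation.map_smul, mkDerivation_X, Derivation.coe_zero,
      Pi.zero_apply]
    rw [smul_smul, smul_smul, ← zpow_add₀ hq, ← zpow_add₀ hq, sub_eq_zero]
    ring_nf
  · simp [hj]

theorem finsum_eDiag_pderiv_sub_eGenDer {q : ℂ} (hq : q ≠ 0) (i k : Idx l) (m n m' n' : ℤ)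
    (p : V l) :
    (∑ᶠ b : ℤ × ℤ, q ^ (n * b.1) • eDiag l q (m + b.1) (n + b.2)
        (pderiv (i, b.1, b.2) (eGenDer l q i k m' n' p)))
      - eGenDer l q i k m' n'
        (∑ᶠ b : ℤ × ℤ, q ^ (n * b.1) • eDiag l q (m + b.1) (n + b.2) (pderiv (i, b.1, b.2) p))
      = ∑ᶠ b : ℤ × ℤ, q ^ (n * b.1) • eDiag l q (m + b.1) (n + b.2)
        (q ^ ((b.1 - m') * n') • pderiv (k, b.1 - m', b.2 - n') p) := by
  set B := eGenDer l q i k m' n'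
  have hdiag (a b : ℤ) (r : V l) : eDiag l q a b (B r) = B (eDiag l q a b r) := by
    rw [← sub_eq_zero, ← Derivation.commutator_apply, lie_eDiag_eGenDer hq, Derivation.zero_apply]
  have hB (b : ℤ × ℤ) : pderiv (i, b.1, b.2) (B p) - B (pderiv (i, b.1, b.2) p) =
      q ^ ((b.1 - m') * n') • pderiv (k, b.1 - m', b.2 - n') p := by
    rw [← Derivation.commutator_apply, lie_pderiv_eGenDer, Derivation.smul_apply]
  rw [map_finsum B (hasFiniteSupport_of_pderiv_eq_zero (v := fun b => (i, b.1, b.2))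
      (Prod.mk_right_injective i) p fun _ h => by simp [h]), ← finsum_sub_distrib
    (hasFiniteSupport_of_pderiv_eq_zero (v := fun b => (i, b.1, b.2)) (Prod.mk_right_injective i)
      (B p) fun _ h => by simp [h])
    (hasFiniteSupport_of_pderiv_eq_zero (v := fun b => (i, b.1, b.2)) (Prod.mk_right_injective i)
      p fun _ h => by simp [h])]
  simp only [Derivation.map_smul, ← hdiag, ← smul_sub, ← map_sub, hB]

end

theorem stmt9_general (l : ℕ) (q μ : ℂ) (hq : q ≠ 0)
    (i k : Idx l) (m1 n1 m2 n2 : ℤ) :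
    oComm (eUp l q μ i m1 n1) (eGen l q i k m2 n2) = fun p =>
      q ^ (n1 * m2) • eUp l q μ k (m1 + m2) (n1 + n2) p := by
  funext p
  simp only [oComm, eGen_eq_eGenDer, eUp_eq_sub_finsum_eDiag hq]
  rw [map_sub, Derivation.map_smul, Derivation.map_smul, sub_sub_sub_comm, ← smul_sub, ← smul_sub,
    ← Derivation.commutator_apply, lie_pderiv_eGenDer, Derivation.smul_apply,
    finsum_eDiag_pderiv_sub_eGenDer hq,
    ← finsum_comp_equiv (Equiv.addRight ((m2, n2) : ℤ × ℤ)), smul_sub, smul_finsum]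
  simp only [Equiv.coe_addRight, Prod.fst_add, Prod.snd_add, add_sub_cancel_right,
    Derivation.map_smul, smul_smul, ← zpow_add₀ hq]
  refine congrArg₂ (· - ·) ?_ (finsum_congr fun c => ?_)
  · rw [show -m1 - m2 = -(m1 + m2) by ring, show -n1 - n2 = -(n1 + n2) by ring, mul_comm μ,
      ← mul_assoc, ← mul_assoc, ← zpow_add₀ hq, ← zpow_add₀ hq]
    ring_nf
  · rw [show n1 * (c.1 + m2) + c.1 * n2 = n1 * m2 + (n1 + n2) * c.1 by ring,
      show m1 + (c.1 + m2) = m1 + m2 + c.1 by ring, show n1 + (c.2 + n2) = n1 + n2 + c.2 by ring]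

theorem stmt9 (l : ℕ) (hl : 2 ≤ l) (q μ : ℂ) (hq : q ≠ 0)
    (i k : Idx l) (m1 n1 m2 n2 : ℤ) :
    oComm (eUp l q μ i m1 n1) (eGen l q i k m2 n2) = fun p =>
      q ^ (n1 * m2) • eUp l q μ k (m1 + m2) (n1 + n2) p :=
  stmt9_general l q μ hq i k m1 n1 m2 n2
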